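/- arXiv:2004.04331 — 4 statements merged into one kernel-verified Lean document; each statement's English description precedes it below -/
import Mathlib

section
/- Let Yᵀ = Σ_{l=1}^{K} X_lᵀ U G_l Vᴴ + Zᵀ, where the pilot matrices X_l ∈ ℂ^{M_k×T} satisfy X_k X_lᴴ = 0 for all l ≠ k, U ∈ ℂ^{M_k×N_k}, V ∈ ℂ^{M_t×N_t} are deterministic, each G_l is a random N_k×N_t complex matrix, and Z is a random T×M_t noise matrix. Assume the entries of G_k are pairwise uncorrelated with power matrix Ω_k, the entries of Zᵀ are pairwise uncorrelated with second-moment matrix N = E[Zᵀ ⊙ conj(Zᵀ)], and all cross second moments between entries of G_k and entries of Z vanish. Then E[(Uᴴ X_k^* Yᵀ V) ⊙ conj(Uᴴ X_k^* Yᵀ V)] = T_kr Ω_k T_t + O_kr N O_t, where T_kr = (Uᴴ X_k^* X_kᵀ U) ⊙ conj(Uᴴ X_k^* X_kᵀ U), T_t = (Vᴴ V) ⊙ conj(Vᴴ V), O_kr = (Uᴴ X_k^*) ⊙ conj(Uᴴ X_k^*), and O_t = V ⊙ conj(V). -/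
/-!
Multiplying by `Uᴴ Xₖ^*` annihilates every user `l ≠ k` by pilot orthogonality, so the processed
signal is `B Gₖ C + A Zᵀ V` with deterministic `A = Uᴴ Xₖ^*`, `B = A Xₖᵀ U`, `C = Vᴴ V`. The two
summands are uncorrelated, so their second moments add; and for a random matrix `W` with
uncorrelated entries, `E|(P W Q)ₛₜ|² = ∑ᵢⱼ |Pₛᵢ|² E|Wᵢⱼ|² |Qⱼₜ|²`, i.e.
`E[(P W Q) ⊙ (P W Q)^*] = (P ⊙ P^*) E[W ⊙ W^*] (Q ⊙ Q^*)`.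
-/

open Matrix MeasureTheory ComplexConjugate

section

variable {α 𝕜 : Type*} [MeasurableSpace α] [RCLike 𝕜] {μ : Measure α}

theorem MeasureTheory.MemLp.integrable_mul_conj {f g : α → 𝕜} (hf : MemLp f 2 μ)
    (hg : MemLp g 2 μ) : Integrable (fun ω => f ω * conj (g ω)) μ :=
  hf.integrable_mul hg.star

theorem integral_sum_mul_conj_sum {ι κ : Type*} [Fintype ι] [Fintype κ] (c : ι → 𝕜) (d : κ → 𝕜)
    {f : ι → α → 𝕜} {g : κ → α → 𝕜} (hf : ∀ i, MemLp (f i) 2 μ) (hg : ∀ j, MemLp (g j) 2 μ) :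
    ∫ ω, (∑ i, c i * f i ω) * conj (∑ j, d j * g j ω) ∂μ
      = ∑ i, ∑ j, c i * conj (d j) * ∫ ω, f i ω * conj (g j ω) ∂μ := by
  have hint i j : Integrable (fun ω => f i ω * conj (g j ω)) μ := (hf i).integrable_mul_conj (hg j)
  have hexpand ω : (∑ i, c i * f i ω) * conj (∑ j, d j * g j ω)
      = ∑ i, ∑ j, c i * conj (d j) * (f i ω * conj (g j ω)) := by
    simp only [map_sum, map_mul, Finset.sum_mul_sum]
    exact Finset.sum_congr rfl fun i _ => Finset.sum_congr rfl fun j _ => by ring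
  simp_rw [hexpand]
  rw [integral_finsetSum _ fun i _ => integrable_finsetSum _ fun j _ => (hint i j).const_mul _]
  refine Finset.sum_congr rfl fun i _ => ?_
  rw [integral_finsetSum _ fun j _ => (hint i j).const_mul _]
  exact Finset.sum_congr rfl fun j _ => integral_const_mul _ _

variable {l m n o m' n' : Type*}

/-- `E[W ⊙ W'^*]`; for `W' = W` this is the power matrix of `W`. -/
noncomputable def crossMoment (μ : Measure α) (W W' : α → Matrix m n 𝕜) : Matrix m n 𝕜 :=
  of fun i j => ∫ ω, W ω i j * conj (W' ω i j) ∂μ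

def EntriesUncorrelated (μ : Measure α) (W : α → Matrix m n 𝕜) : Prop :=
  ∀ i j i' j', (i, j) ≠ (i', j') → ∫ ω, W ω i j * conj (W ω i' j') ∂μ = 0

theorem crossMoment_add_self {W W' : α → Matrix m n 𝕜}
    (hW : ∀ i j, MemLp (fun ω => W ω i j) 2 μ) (hW' : ∀ i j, MemLp (fun ω => W' ω i j) 2 μ)
    (horth : crossMoment μ W W' = 0) :
    crossMoment μ (W + W') (W + W') = crossMoment μ W W + crossMoment μ W' W' := by
  ext i j
  have h₁ := (hW i j).integrable_mul_conj (hW i j)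
  have h₂ := (hW i j).integrable_mul_conj (hW' i j)
  have h₃ := (hW' i j).integrable_mul_conj (hW i j)
  have h₄ := (hW' i j).integrable_mul_conj (hW' i j)
  have hWW' : ∫ ω, W ω i j * conj (W' ω i j) ∂μ = 0 := congrFun (congrFun horth i) j
  have hW'W : ∫ ω, W' ω i j * conj (W ω i j) ∂μ = 0 := by
    rw [← RCLike.conj_conj (∫ ω, W' ω i j * conj (W ω i j) ∂μ), ← integral_conj]
    simp_rw [map_mul, RCLike.conj_conj, mul_comm (conj (W' _ i j))]
    rw [hWW', map_zero]
  have hexpand ω : (W + W') ω i j * conj ((W + W') ω i j)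
      = (W ω i j * conj (W ω i j) + W ω i j * conj (W' ω i j))
        + (W' ω i j * conj (W ω i j) + W' ω i j * conj (W' ω i j)) := by
    simp only [Pi.add_apply, Matrix.add_apply, map_add]; ring
  simp only [crossMoment, of_apply, Matrix.add_apply]
  simp_rw [hexpand]
  rw [integral_add, integral_add, integral_add, hWW', hW'W, add_zero, zero_add]
  exacts [h₃, h₄, h₁, h₂, h₁.add h₂, h₃.add h₄]

theorem EntriesUncorrelated.integral_mul_conj [DecidableEq m] [DecidableEq n]
    {W : α → Matrix m n 𝕜} (hW : EntriesUncorrelated μ W) (p p' : m × n) :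
    ∫ ω, W ω p.1 p.2 * conj (W ω p'.1 p'.2) ∂μ
      = if p = p' then crossMoment μ W W p.1 p.2 else 0 := by
  split_ifs with h
  · rw [h]; rfl
  · exact hW _ _ _ _ h

variable [Fintype m] [Fintype n] [Fintype m'] [Fintype n']

theorem Matrix.mul_mul_apply_eq_sum (P : Matrix l m 𝕜) (W : Matrix m n 𝕜) (Q : Matrix n o 𝕜)
    (s : l) (t : o) : (P * W * Q) s t = ∑ p : m × n, P s p.1 * Q p.2 t * W p.1 p.2 := by
  simp only [mul_apply, Finset.sum_mul, Fintype.sum_prod_type]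
  rw [Finset.sum_comm]
  exact Finset.sum_congr rfl fun i _ => Finset.sum_congr rfl fun j _ => by ring

theorem memLp_mul_mul_apply {W : α → Matrix m n 𝕜} (hW : ∀ i j, MemLp (fun ω => W ω i j) 2 μ)
    (P : Matrix l m 𝕜) (Q : Matrix n o 𝕜) (s : l) (t : o) :
    MemLp (fun ω => (P * W ω * Q) s t) 2 μ := by
  simp_rw [mul_mul_apply_eq_sum]
  exact memLp_finsetSum _ fun p _ => (hW p.1 p.2).const_mul _

theorem crossMoment_mul_mul_apply {W : α → Matrix m n 𝕜} {W' : α → Matrix m' n' 𝕜}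
    (hW : ∀ i j, MemLp (fun ω => W ω i j) 2 μ) (hW' : ∀ i j, MemLp (fun ω => W' ω i j) 2 μ)
    (P : Matrix l m 𝕜) (Q : Matrix n o 𝕜) (P' : Matrix l m' 𝕜) (Q' : Matrix n' o 𝕜)
    (s : l) (t : o) :
    crossMoment μ (fun ω => P * W ω * Q) (fun ω => P' * W' ω * Q') s t
      = ∑ p : m × n, ∑ p' : m' × n', P s p.1 * Q p.2 t * conj (P' s p'.1 * Q' p'.2 t)
          * ∫ ω, W ω p.1 p.2 * conj (W' ω p'.1 p'.2) ∂μ := by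
  simp only [crossMoment, of_apply, mul_mul_apply_eq_sum]
  exact integral_sum_mul_conj_sum _ _ (fun p => hW p.1 p.2) (fun p' => hW' p'.1 p'.2)

theorem crossMoment_mul_mul_eq_zero {W : α → Matrix m n 𝕜} {W' : α → Matrix m' n' 𝕜}
    (hW : ∀ i j, MemLp (fun ω => W ω i j) 2 μ) (hW' : ∀ i j, MemLp (fun ω => W' ω i j) 2 μ)
    (hcross : ∀ i j i' j', ∫ ω, W ω i j * conj (W' ω i' j') ∂μ = 0)
    (P : Matrix l m 𝕜) (Q : Matrix n o 𝕜) (P' : Matrix l m' 𝕜) (Q' : Matrix n' o 𝕜) :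
    crossMoment μ (fun ω => P * W ω * Q) (fun ω => P' * W' ω * Q') = 0 := by
  ext s t
  simp [crossMoment_mul_mul_apply hW hW', hcross]

theorem crossMoment_mul_mul_self {W : α → Matrix m n 𝕜}
    (hW : ∀ i j, MemLp (fun ω => W ω i j) 2 μ) (hunc : EntriesUncorrelated μ W)
    (P : Matrix l m 𝕜) (Q : Matrix n o 𝕜) :
    crossMoment μ (fun ω => P * W ω * Q) (fun ω => P * W ω * Q)
      = (P ⊙ P.map conj) * crossMoment μ W W * (Q ⊙ Q.map conj) := by
  classical
  ext s t
  simp only [crossMoment_mul_mul_apply hW hW, hunc.integral_mul_conj, mul_ite, mul_zero,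
    Finset.sum_ite_eq, Finset.mem_univ, if_true, mul_mul_apply_eq_sum, hadamard_apply, map_apply,
    map_mul]
  exact Finset.sum_congr rfl fun p _ => by ring

theorem Matrix.map_conj_mul_transpose_eq_zero {A : Matrix l n 𝕜} {B : Matrix o n 𝕜}
    (h : A * Bᴴ = 0) : A.map conj * Bᵀ = 0 := by
  have := congrArg (Matrix.map · conj) h
  simpa [Matrix.map_mul, conjTranspose, Matrix.map_map, Function.comp_def] using this

end

theorem stmt1_general {α : Type*} [MeasurableSpace α] (μ : Measure α)
    {K T Mk Mt Nk Nt : ℕ}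
    (X : Fin K → Matrix (Fin Mk) (Fin T) ℂ)
    (U : Matrix (Fin Mk) (Fin Nk) ℂ) (V : Matrix (Fin Mt) (Fin Nt) ℂ)
    (G : Fin K → α → Matrix (Fin Nk) (Fin Nt) ℂ)
    (Zt : α → Matrix (Fin T) (Fin Mt) ℂ)
    (Yt : α → Matrix (Fin T) (Fin Mt) ℂ)
    (hY : ∀ ω, Yt ω = (∑ l, (X l)ᵀ * U * G l ω * Vᴴ) + Zt ω)
    (k : Fin K)
    (horth : ∀ l, l ≠ k → X k * (X l)ᴴ = 0)
    (hGL2 : ∀ l a b, MemLp (fun ω => G l ω a b) 2 μ)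
    (hZL2 : ∀ i j, MemLp (fun ω => Zt ω i j) 2 μ)
    (Omk : Matrix (Fin Nk) (Fin Nt) ℝ)
    (hG : ∀ s₁ s₂ t₁ t₂, (∫ ω, G k ω s₁ s₂ * (starRingEnd ℂ) (G k ω t₁ t₂) ∂μ)
      = if s₁ = t₁ ∧ s₂ = t₂ then (Omk s₁ s₂ : ℂ) else 0)
    (hZuncorr : ∀ i j i' j', (i, j) ≠ (i', j') →
      (∫ ω, Zt ω i j * (starRingEnd ℂ) (Zt ω i' j') ∂μ) = 0)
    (hcross : ∀ a b i j,
      (∫ ω, G k ω a b * (starRingEnd ℂ) (Zt ω i j) ∂μ) = 0 ∧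
      (∫ ω, G k ω a b * Zt ω i j ∂μ) = 0) :
    (Matrix.of fun s t =>
        ∫ ω, (Uᴴ * (X k).map (starRingEnd ℂ) * Yt ω * V) s t
          * (starRingEnd ℂ) ((Uᴴ * (X k).map (starRingEnd ℂ) * Yt ω * V) s t) ∂μ)
      = ((Uᴴ * (X k).map (starRingEnd ℂ) * (X k)ᵀ * U)
            ⊙ (Uᴴ * (X k).map (starRingEnd ℂ) * (X k)ᵀ * U).map (starRingEnd ℂ))
          * Omk.map (fun x => (x : ℂ))
          * ((Vᴴ * V) ⊙ (Vᴴ * V).map (starRingEnd ℂ))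
        + ((Uᴴ * (X k).map (starRingEnd ℂ)) ⊙ (Uᴴ * (X k).map (starRingEnd ℂ)).map (starRingEnd ℂ))
          * (Matrix.of fun i j => ∫ ω, Zt ω i j * (starRingEnd ℂ) (Zt ω i j) ∂μ)
          * (V ⊙ V.map (starRingEnd ℂ)) := by
  set A := Uᴴ * (X k).map (starRingEnd ℂ)
  have hsignal : (fun ω => A * Yt ω * V)
      = (fun ω => A * (X k)ᵀ * U * G k ω * (Vᴴ * V)) + fun ω => A * Zt ω * V := by
    funext ω
    have hother : ∀ l ≠ k, A * ((X l)ᵀ * U * G l ω * Vᴴ) = 0 := fun l hl => by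
      simp only [A, Matrix.mul_assoc, ← Matrix.mul_assoc ((X k).map _),
        map_conj_mul_transpose_eq_zero (horth l hl), Matrix.zero_mul, Matrix.mul_zero]
    rw [hY ω, Matrix.mul_add, Matrix.mul_sum, Finset.sum_eq_single k (fun l _ hl => hother l hl)
      (by simp), Matrix.add_mul]
    simp only [Pi.add_apply, Matrix.mul_assoc]
  have hGunc : EntriesUncorrelated μ (G k) := fun a b a' b' hne => by
    rw [hG, if_neg fun h => hne (Prod.ext h.1 h.2)]
  have hGpow : crossMoment μ (G k) (G k) = Omk.map (fun x => (x : ℂ)) := by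
    ext a b
    simpa [crossMoment] using hG a b a b
  have hGZ : crossMoment μ (fun ω => A * (X k)ᵀ * U * G k ω * (Vᴴ * V))
      (fun ω => A * Zt ω * V) = 0 :=
    crossMoment_mul_mul_eq_zero (hGL2 k) hZL2 (fun a b i j => (hcross a b i j).1) _ _ _ _
  change crossMoment μ (fun ω => A * Yt ω * V) (fun ω => A * Yt ω * V) = _
  rw [hsignal, crossMoment_add_self (fun _ _ => memLp_mul_mul_apply (hGL2 k) _ _ _ _)
    (fun _ _ => memLp_mul_mul_apply hZL2 _ _ _ _) hGZ, crossMoment_mul_mul_self (hGL2 k) hGunc,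
    crossMoment_mul_mul_self hZL2 hZuncorr, hGpow]
  rfl

/-- Second-moment identity for the received pilot signal:
`E[(Uᴴ Xₖ^* Yᵀ V) ⊙ (Uᴴ Xₖ^* Yᵀ V)^*] = T_kr Ω_k T_t + O_kr N O_t`,
where `Yᵀ = ∑_l Xₗᵀ U Gₗ Vᴴ + Zᵀ`, the pilots of distinct users are orthogonal, the entries of
`G_k` are pairwise uncorrelated with power matrix `Ω_k`, the entries of `Zᵀ` are pairwise
uncorrelated with second-moment matrix `N = E[Zᵀ ⊙ (Zᵀ)^*]`, and all cross second moments
between entries of `G_k` and entries of `Z` vanish.  Here `Zt` stands for `Zᵀ`. -/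
theorem stmt1 {α : Type*} [MeasurableSpace α] (μ : Measure α) [IsProbabilityMeasure μ]
    {K T Mk Mt Nk Nt : ℕ}
    (X : Fin K → Matrix (Fin Mk) (Fin T) ℂ)
    (U : Matrix (Fin Mk) (Fin Nk) ℂ) (V : Matrix (Fin Mt) (Fin Nt) ℂ)
    (G : Fin K → α → Matrix (Fin Nk) (Fin Nt) ℂ)
    (Zt : α → Matrix (Fin T) (Fin Mt) ℂ)
    (Yt : α → Matrix (Fin T) (Fin Mt) ℂ)
    (hY : ∀ ω, Yt ω = (∑ l, (X l)ᵀ * U * G l ω * Vᴴ) + Zt ω)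
    (k : Fin K)
    (horth : ∀ l, l ≠ k → X k * (X l)ᴴ = 0)
    (hGL2 : ∀ l a b, MemLp (fun ω => G l ω a b) 2 μ)
    (hZL2 : ∀ i j, MemLp (fun ω => Zt ω i j) 2 μ)
    (Omk : Matrix (Fin Nk) (Fin Nt) ℝ)
    (hG : ∀ s₁ s₂ t₁ t₂, (∫ ω, G k ω s₁ s₂ * (starRingEnd ℂ) (G k ω t₁ t₂) ∂μ)
      = if s₁ = t₁ ∧ s₂ = t₂ then (Omk s₁ s₂ : ℂ) else 0)
    (hZuncorr : ∀ i j i' j', (i, j) ≠ (i', j') →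
      (∫ ω, Zt ω i j * (starRingEnd ℂ) (Zt ω i' j') ∂μ) = 0)
    (hcross : ∀ a b i j,
      (∫ ω, G k ω a b * (starRingEnd ℂ) (Zt ω i j) ∂μ) = 0 ∧
      (∫ ω, G k ω a b * Zt ω i j ∂μ) = 0) :
    (Matrix.of fun s t =>
        ∫ ω, (Uᴴ * (X k).map (starRingEnd ℂ) * Yt ω * V) s t
          * (starRingEnd ℂ) ((Uᴴ * (X k).map (starRingEnd ℂ) * Yt ω * V) s t) ∂μ)
      = ((Uᴴ * (X k).map (starRingEnd ℂ) * (X k)ᵀ * U)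
            ⊙ (Uᴴ * (X k).map (starRingEnd ℂ) * (X k)ᵀ * U).map (starRingEnd ℂ))
          * Omk.map (fun x => (x : ℂ))
          * ((Vᴴ * V) ⊙ (Vᴴ * V).map (starRingEnd ℂ))
        + ((Uᴴ * (X k).map (starRingEnd ℂ)) ⊙ (Uᴴ * (X k).map (starRingEnd ℂ)).map (starRingEnd ℂ))
          * (Matrix.of fun i j => ∫ ω, Zt ω i j * (starRingEnd ℂ) (Zt ω i j) ∂μ)
          * (V ⊙ V.map (starRingEnd ℂ)) :=
  stmt1_general μ X U V G Zt Yt hY k horth hGL2 hZL2 Omk hG hZuncorr hcross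
end

section
/- If U ∈ ℂ^{M_k×M_k} and V ∈ ℂ^{M_t×M_t} are unitary, the pilot matrix satisfies X_k X_kᴴ = I, the noise is absent (Z = 0), and Yᵀ = X_kᵀ U G_k Vᴴ where the entries of the random matrix G_k are pairwise uncorrelated with power matrix Ω_k, then E[(Uᴴ X_k^* Yᵀ V) ⊙ conj(Uᴴ X_k^* Yᵀ V)] = Ω_k (cast entrywise into ℂ). -/
open Matrix MeasureTheory
open scoped Matrix

/-! Without noise, `X_k X_kᴴ = I` gives `X_k^* X_kᵀ = I`, so the beam-domain transform
`Uᴴ X_k^* Yᵀ V` returns `G_k` itself; the expectation of `G_k ⊙ G_k^*` is then the diagonal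
`s = t` of the uncorrelatedness relation, i.e. `Ω_k`. -/

namespace Matrix

variable {m n p R : Type*} [Fintype n] [Fintype p] [CommSemiring R] [StarRing R]

theorem map_star_mul_transpose_eq_one [DecidableEq m] {X : Matrix m n R} (hX : X * Xᴴ = 1) :
    X.map (starRingEnd R) * Xᵀ = 1 := by
  have h := congrArg transpose hX
  rwa [transpose_mul, transpose_one, conjTranspose, transpose_map, transpose_transpose] at h

theorem conjTranspose_mul_conj_mul_transpose_mul_mul_conjTranspose_mul_eq
    [Fintype m] [DecidableEq m] [DecidableEq p]
    {U : Matrix m m R} {V : Matrix p p R} {X : Matrix m n R}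
    (hU : Uᴴ * U = 1) (hV : Vᴴ * V = 1) (hX : X * Xᴴ = 1) (G : Matrix m p R) :
    Uᴴ * X.map (starRingEnd R) * (Xᵀ * U * G * Vᴴ) * V = G := calc
  _ = Uᴴ * (X.map (starRingEnd R) * Xᵀ) * U * G * (Vᴴ * V) := by simp only [Matrix.mul_assoc]
  _ = G := by rw [map_star_mul_transpose_eq_one hX, hV, Matrix.mul_one, Matrix.mul_one, hU,
    Matrix.one_mul]

end Matrix

theorem stmt2_general {α : Type*} [MeasurableSpace α] (μ : Measure α)
    {T Mk Mt : ℕ}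
    (U : Matrix (Fin Mk) (Fin Mk) ℂ) (V : Matrix (Fin Mt) (Fin Mt) ℂ)
    (hU : U ∈ Matrix.unitaryGroup (Fin Mk) ℂ) (hV : V ∈ Matrix.unitaryGroup (Fin Mt) ℂ)
    (Xk : Matrix (Fin Mk) (Fin T) ℂ) (hX : Xk * Xkᴴ = 1)
    (G : α → Matrix (Fin Mk) (Fin Mt) ℂ)
    (Omk : Matrix (Fin Mk) (Fin Mt) ℝ)
    (hG : ∀ s₁ s₂ t₁ t₂, (∫ ω, G ω s₁ s₂ * (starRingEnd ℂ) (G ω t₁ t₂) ∂μ)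
      = if s₁ = t₁ ∧ s₂ = t₂ then (Omk s₁ s₂ : ℂ) else 0)
    (Yt : α → Matrix (Fin T) (Fin Mt) ℂ)
    (hY : ∀ ω, Yt ω = Xkᵀ * U * G ω * Vᴴ) :
    (Matrix.of fun s t =>
        ∫ ω, (Uᴴ * Xk.map (starRingEnd ℂ) * Yt ω * V) s t
          * (starRingEnd ℂ) ((Uᴴ * Xk.map (starRingEnd ℂ) * Yt ω * V) s t) ∂μ)
      = Omk.map (fun x => (x : ℂ)) := by
  have hBeam : ∀ ω, Uᴴ * Xk.map (starRingEnd ℂ) * Yt ω * V = G ω := fun ω => by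
    rw [hY ω]
    exact conjTranspose_mul_conj_mul_transpose_mul_mul_conjTranspose_mul_eq hU.1 hV.1 hX (G ω)
  ext s t
  simpa only [of_apply, map_apply, hBeam, and_self, if_true] using hG s t s t

/-- In the conventional beam domain channel model, where `U` and `V` are unitary,
`X_k X_kᴴ = I`, and the noise is absent, `E[(Uᴴ Xₖ^* Yᵀ V) ⊙ (Uᴴ Xₖ^* Yᵀ V)^*] = Ω_k`. -/
theorem stmt2 {α : Type*} [MeasurableSpace α] (μ : Measure α) [IsProbabilityMeasure μ]
    {T Mk Mt : ℕ}
    (U : Matrix (Fin Mk) (Fin Mk) ℂ) (V : Matrix (Fin Mt) (Fin Mt) ℂ)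
    (hU : U ∈ Matrix.unitaryGroup (Fin Mk) ℂ) (hV : V ∈ Matrix.unitaryGroup (Fin Mt) ℂ)
    (Xk : Matrix (Fin Mk) (Fin T) ℂ) (hX : Xk * Xkᴴ = 1)
    (G : α → Matrix (Fin Mk) (Fin Mt) ℂ)
    (hGL2 : ∀ a b, MemLp (fun ω => G ω a b) 2 μ)
    (Omk : Matrix (Fin Mk) (Fin Mt) ℝ)
    (hG : ∀ s₁ s₂ t₁ t₂, (∫ ω, G ω s₁ s₂ * (starRingEnd ℂ) (G ω t₁ t₂) ∂μ)
      = if s₁ = t₁ ∧ s₂ = t₂ then (Omk s₁ s₂ : ℂ) else 0)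
    (Yt : α → Matrix (Fin T) (Fin Mt) ℂ)
    (hY : ∀ ω, Yt ω = Xkᵀ * U * G ω * Vᴴ) :
    (Matrix.of fun s t =>
        ∫ ω, (Uᴴ * Xk.map (starRingEnd ℂ) * Yt ω * V) s t
          * (starRingEnd ℂ) ((Uᴴ * Xk.map (starRingEnd ℂ) * Yt ω * V) s t) ∂μ)
      = Omk.map (fun x => (x : ℂ)) :=
  stmt2_general μ U V hU hV Xk hX G Omk hG Yt hY
end

section
/- Let Φ ∈ ℝ^{a×b}, T ∈ ℝ^{a×n}, S ∈ ℝ^{m×b}, N' ∈ ℝ^{a×b}, and M ∈ ℝ^{n×m}, and assume every entry of T (M ⊙ M) S + N' is strictly positive. Fix indices (u,v). Then the real function t ↦ Σ_{i,j} Φ_{ij} · log [T ((M + t·E_{uv}) ⊙ (M + t·E_{uv})) S + N']_{ij}, where E_{uv} is the matrix with 1 in position (u,v) and 0 elsewhere, is differentiable at t = 0 with derivative 2·(S Qᵀ T)_{vu}·M_{uv} = 2·[(S Qᵀ T)ᵀ ⊙ M]_{uv}, where Q ∈ ℝ^{a×b} is defined by Q_{ij} = Φ_{ij} / [T (M ⊙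 M) S + N']_{ij}. (The paper's gradient convention absorbs the factor 2.) -/
open Matrix
open scoped Matrix

/-!
Along the line `t ↦ M + t E_{uv}` every entry of `T ((M + t E_{uv}) ⊙ (M + t E_{uv})) S + N'`
is a quadratic polynomial in `t` whose derivative at `0` is `2 M_{uv} T_{iu} S_{vj}`, the
`(i, j)` entry of `T E_{uv}(2 M_{uv}) S`. The chain rule for `log` turns the derivative of the sum
into `∑_{ij} Q_{ij} (T E_{uv}(2 M_{uv}) S)_{ij}`, and this pairing of `Q` with a rank-one matrix is
`2 M_{uv} (S Qᵀ T)_{vu}`.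
-/

namespace Matrix

variable {ι κ μ ν α 𝕜 : Type*}

theorem hadamard_single [DecidableEq κ] [DecidableEq μ] [MulZeroClass α] (M : Matrix κ μ α)
    (u : κ) (v : μ) (c : α) : M ⊙ single u v c = single u v (M u v * c) := by
  ext k l
  simp only [hadamard_apply, single_apply]
  split_ifs with h
  · obtain ⟨rfl, rfl⟩ := h; rfl
  · simp

theorem mul_single_mul_apply [Fintype κ] [Fintype μ] [DecidableEq κ] [DecidableEq μ]
    [NonUnitalNonAssocSemiring α] (T : Matrix ι κ α) (S : Matrix μ ν α) (u : κ) (v : μ) (c : α)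
    (i : ι) (j : ν) : (T * single u v c * S) i j = T i u * c * S v j := by
  rw [mul_apply, Finset.sum_eq_single v
    (fun l _ hl => by rw [mul_single_apply_of_ne _ _ _ _ _ hl, zero_mul]) (by simp),
    mul_single_apply_same]

theorem sum_mul_mul_single_mul_apply [Fintype ι] [Fintype ν] [Fintype κ] [Fintype μ]
    [DecidableEq κ] [DecidableEq μ] [CommSemiring α] (Q : Matrix ι ν α) (T : Matrix ι κ α)
    (S : Matrix μ ν α) (u : κ) (v : μ) (c : α) :
    ∑ i, ∑ j, Q i j * (T * single u v c * S) i j = (S * Qᵀ * T) v u * c := by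
  simp only [mul_single_mul_apply]
  simp only [mul_apply, transpose_apply, Finset.sum_mul]
  exact Finset.sum_congr rfl fun i _ => Finset.sum_congr rfl fun j _ => by ring

variable [NontriviallyNormedField 𝕜]

theorem hasDerivAt_hadamard_self_add_smul_apply (M D : Matrix κ μ 𝕜) (x : 𝕜) (k : κ) (l : μ) :
    HasDerivAt (fun t : 𝕜 => ((M + t • D) ⊙ (M + t • D)) k l)
      (((2 : 𝕜) • ((M + x • D) ⊙ D)) k l) x := by
  have h : HasDerivAt (fun t : 𝕜 => M k l + t * D k l) (D k l) x := by
    simpa using ((hasDerivAt_id x).mul_const (D k l)).const_add (M k l)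
  refine (h.mul h).congr_deriv ?_
  simp only [Matrix.smul_apply, hadamard_apply, Matrix.add_apply, smul_eq_mul]
  ring

theorem hasDerivAt_mul_mul_apply [Fintype κ] [Fintype μ] (T : Matrix ι κ 𝕜) (S : Matrix μ ν 𝕜)
    {A : 𝕜 → Matrix κ μ 𝕜} {A' : Matrix κ μ 𝕜} {x : 𝕜}
    (hA : ∀ k l, HasDerivAt (fun t => A t k l) (A' k l) x) (i : ι) (j : ν) :
    HasDerivAt (fun t => (T * A t * S) i j) ((T * A' * S) i j) x := by
  simp only [mul_apply]
  exact HasDerivAt.fun_sum fun l _ =>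
    (HasDerivAt.fun_sum fun k _ => (hA k l).const_mul (T i k)).mul_const (S l j)

theorem hasDerivAt_sum_mul_log_apply [Fintype ι] [Fintype κ] (Φ : Matrix ι κ ℝ)
    {F : ℝ → Matrix ι κ ℝ} {F' : Matrix ι κ ℝ} {x : ℝ}
    (hF : ∀ i j, HasDerivAt (fun t => F t i j) (F' i j) x) (hne : ∀ i j, F x i j ≠ 0) :
    HasDerivAt (fun t => ∑ i, ∑ j, Φ i j * Real.log (F t i j))
      (∑ i, ∑ j, Φ i j / F x i j * F' i j) x :=
  HasDerivAt.fun_sum fun i _ => HasDerivAt.fun_sum fun j _ =>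
    (((hF i j).log (hne i j)).const_mul (Φ i j)).congr_deriv (by ring)

end Matrix

/-- The directional derivative of `M ↦ ∑_{i,j} Φ_{ij} log [T (M ⊙ M) S + N']_{ij}` in the
direction of the standard basis matrix `E_{uv}` is `2 (S Qᵀ T)_{vu} M_{uv}`, where
`Q_{ij} = Φ_{ij} / [T (M ⊙ M) S + N']_{ij}`, provided all entries of
`T (M ⊙ M) S + N'` are strictly positive. -/
theorem stmt5 {a b n m : ℕ} (Φ : Matrix (Fin a) (Fin b) ℝ)
    (T : Matrix (Fin a) (Fin n) ℝ) (S : Matrix (Fin m) (Fin b) ℝ)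
    (N' : Matrix (Fin a) (Fin b) ℝ) (M : Matrix (Fin n) (Fin m) ℝ)
    (hpos : ∀ i j, 0 < (T * (M ⊙ M) * S + N') i j)
    (u : Fin n) (v : Fin m) :
    HasDerivAt (fun t : ℝ => ∑ i, ∑ j, Φ i j *
        Real.log ((T * ((M + t • Matrix.single u v (1 : ℝ))
            ⊙ (M + t • Matrix.single u v (1 : ℝ))) * S + N') i j))
      (2 * (S * (Matrix.of fun i j => Φ i j / (T * (M ⊙ M) * S + N') i j)ᵀ * T) v u * M u v)
      0 := by
  have hentry : ∀ i j, HasDerivAt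
      (fun t : ℝ => (T * ((M + t • single u v (1 : ℝ)) ⊙ (M + t • single u v 1)) * S + N') i j)
      ((T * ((2 : ℝ) • ((M + (0 : ℝ) • single u v (1 : ℝ)) ⊙ single u v 1)) * S) i j) 0 :=
    fun i j => (hasDerivAt_mul_mul_apply T S
      (hasDerivAt_hadamard_self_add_smul_apply M _ 0) i j).add_const _
  convert hasDerivAt_sum_mul_log_apply Φ hentry (fun i j => by simpa using (hpos i j).ne') using 1
  simp only [zero_smul, add_zero, hadamard_single, smul_single, mul_one, smul_eq_mul]
  have hpair := sum_mul_mul_single_mul_apply (of fun i j => Φ i j / (T * (M ⊙ M) * S + N') i j)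
    T S u v (2 * M u v)
  simp only [of_apply] at hpair
  rw [hpair]
  ring
end

section
/- Let H ∈ ℂ^{m×n}, let R₀ ∈ ℂ^{m×m} be Hermitian positive definite, let P_l ∈ ℂ^{n×d_l} and P, Δ ∈ ℂ^{n×d}. Define for real t the matrices R(t) = R₀ + H (P + tΔ)(P + tΔ)ᴴ Hᴴ and Ř(t) = R(t) + H P_l P_lᴴ Hᴴ, and the rate function φ(t) = log(det(Ř(t)).re) − log(det(R(t)).re). Then φ is differentiable at t = 0 with derivative φ'(0) = −2·Re tr(Δᴴ Hᴴ (R(0)⁻¹ − Ř(0)⁻¹) H P). (This is the deterministic core of the gradient formula ∂R_l/∂P_k^* = −F_l P_k with F_l = Hᴴ R_l⁻¹ H − Hᴴ Ř_l⁻¹ H for an interfered user's rate.) -/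
open Matrix
open scoped Matrix ComplexOrder

/-!
Jacobi's formula, obtained by differentiating the Leibniz expansion of the determinant, gives
`(log det M)' = Re tr(M⁻¹ M')` along a curve through a positive definite matrix. Both `R(t)` and
`Ř(t)` are curves `R₁ + (HP + tHΔ)(HP + tHΔ)ᴴ` with positive definite base (`R₁ = R₀`, resp.
`R₀ + H Pₗ Pₗᴴ Hᴴ`) and velocity `HΔ(HP)ᴴ + HP(HΔ)ᴴ` at `0`. As `G = R₁ + HP(HP)ᴴ` is Hermitian, the
two velocity terms have the same real trace against `G⁻¹`, so each log-determinant has derivative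
`2 Re tr(Δᴴ Hᴴ G⁻¹ H P)`.
-/

open Finset Equiv

namespace Matrix

section Deriv

variable {𝕜 R : Type*} [NontriviallyNormedField 𝕜] [NormedCommRing R] [NormedAlgebra 𝕜 R]

theorem hasDerivAt_mul_apply {l m n : Type*} [Fintype m] {A : 𝕜 → Matrix l m R}
    {B : 𝕜 → Matrix m n R} {A' : Matrix l m R} {B' : Matrix m n R} {x : 𝕜}
    (hA : ∀ i j, HasDerivAt (fun t => A t i j) (A' i j) x)
    (hB : ∀ i j, HasDerivAt (fun t => B t i j) (B' i j) x) (i : l) (j : n) :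
    HasDerivAt (fun t => (A t * B t) i j) ((A' * B x + A x * B') i j) x := by
  simp only [mul_apply, add_apply, ← Finset.sum_add_distrib]
  exact HasDerivAt.fun_sum fun k _ => (hA i k).mul (hB k j)

variable {n : Type*} [Fintype n] [DecidableEq n]

theorem trace_adjugate_mul (A B : Matrix n n R) :
    trace (adjugate A * B) = ∑ i, (A.updateCol i fun r => B r i).det := by
  simp only [trace, diag, mul_apply, ← cramer_apply, cramer_eq_adjugate_mulVec]
  rfl

theorem det_updateCol_eq_sum_perm (A : Matrix n n R) (i : n) (b : n → R) :
    (A.updateCol i b).det =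
      ∑ σ : Perm n, ((Perm.sign σ : ℤ) : R) * ((∏ j ∈ univ.erase i, A (σ j) j) * b (σ i)) := by
  rw [det_apply']
  refine Finset.sum_congr rfl fun σ _ => ?_
  rw [← Finset.mul_prod_erase univ _ (Finset.mem_univ i), mul_comm (updateCol A i b (σ i) i),
    updateCol_self]
  congr 2
  exact Finset.prod_congr rfl fun j hj => updateCol_ne (Finset.mem_erase.mp hj).1

theorem hasDerivAt_det {M : 𝕜 → Matrix n n R} {M' : Matrix n n R} {x : 𝕜}
    (hM : ∀ i j, HasDerivAt (fun t => M t i j) (M' i j) x) :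
    HasDerivAt (fun t => (M t).det) (trace (adjugate (M x) * M')) x := by
  have hLeibniz : HasDerivAt (fun t => (M t).det)
      (∑ σ : Perm n, ((Perm.sign σ : ℤ) : R) *
        ∑ i, (∏ j ∈ univ.erase i, M x (σ j) j) * M' (σ i) i) x := by
    simp only [det_apply']
    refine HasDerivAt.fun_sum fun σ _ => ?_
    simpa only [smul_eq_mul] using
      (HasDerivAt.fun_finsetProd (u := univ) fun i _ => hM (σ i) i).const_mul
        ((Perm.sign σ : ℤ) : R)
  convert hLeibniz using 1
  simp only [trace_adjugate_mul, det_updateCol_eq_sum_perm, Finset.mul_sum]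
  exact Finset.sum_comm

end Deriv

section RCLike

variable {𝕜 : Type*} [RCLike 𝕜] {m n : Type*} [Fintype m] [Fintype n]

open RCLike

theorem hasDerivAt_log_re_det [DecidableEq n] {M : ℝ → Matrix n n 𝕜} {M' : Matrix n n 𝕜} {x : ℝ}
    (hMx : (M x).PosDef) (hM : ∀ i j, HasDerivAt (fun t => M t i j) (M' i j) x) :
    HasDerivAt (fun t => Real.log (re (M t).det)) (re (trace ((M x)⁻¹ * M'))) x := by
  obtain ⟨r, hr, hdet⟩ := pos_iff_exists_ofReal.mp hMx.det_pos
  have hre : HasDerivAt (fun t => re (M t).det) (re (trace (adjugate (M x) * M'))) x :=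
    (reCLM (K := 𝕜)).hasFDerivAt.comp_hasDerivAt x (hasDerivAt_det hM)
  have hadj : adjugate (M x) = (r : 𝕜) • (M x)⁻¹ := by
    rw [inv_def, smul_smul, ← hdet, Ring.inverse_eq_inv,
      mul_inv_cancel₀ (ofReal_ne_zero.mpr hr.ne'), one_smul]
  convert hre.log (by rw [← hdet, ofReal_re]; exact hr.ne') using 1
  rw [hadj, smul_mul_assoc, trace_smul, smul_eq_mul, re_ofReal_mul, ← hdet, ofReal_re]
  field_simp

theorem re_trace_mul_mul_conjTranspose_comm {G : Matrix m m 𝕜} (hG : G.IsHermitian)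
    (U V : Matrix m n 𝕜) : re (trace (G * (U * Vᴴ))) = re (trace (G * (V * Uᴴ))) := by
  rw [← conj_re (trace (G * (V * Uᴴ))), ← star_def, ← trace_conjTranspose]
  simp only [conjTranspose_mul, conjTranspose_conjTranspose, hG.eq]
  rw [trace_mul_comm, Matrix.mul_assoc]

theorem hasDerivAt_log_re_det_add_mul_conjTranspose {R₀ : Matrix m m 𝕜} (hR₀ : R₀.PosDef)
    [DecidableEq m] (U V : Matrix m n 𝕜) :
    HasDerivAt (fun t : ℝ => Real.log (re (R₀ + (U + (t : 𝕜) • V) * (U + (t : 𝕜) • V)ᴴ).det))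
      (2 * re (trace (Vᴴ * (R₀ + U * Uᴴ)⁻¹ * U))) 0 := by
  set W : ℝ → Matrix m n 𝕜 := fun t => U + (t : 𝕜) • V
  have hW : ∀ i j, HasDerivAt (fun t => W t i j) (V i j) 0 := fun i j => by
    simpa [W, real_smul_eq_coe_mul] using
      ((hasDerivAt_id (0 : ℝ)).smul_const (V i j)).const_add (U i j)
  have hWstar : ∀ i j, HasDerivAt (fun t => (W t)ᴴ i j) (Vᴴ i j) 0 := fun i j => (hW j i).star
  have hM : ∀ i j, HasDerivAt (fun t => (R₀ + W t * (W t)ᴴ) i j)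
      ((V * Uᴴ + U * Vᴴ) i j) 0 := fun i j => by
    simpa [W] using (hasDerivAt_mul_apply hW hWstar i j).const_add (R₀ i j)
  have hW0 : W 0 = U := by simp [W]
  have hG : (R₀ + U * Uᴴ).PosDef := hR₀.add_posSemidef (posSemidef_self_mul_conjTranspose U)
  convert hasDerivAt_log_re_det (hW0 ▸ hG) hM using 1
  rw [hW0, Matrix.mul_add, trace_add, map_add,
    re_trace_mul_mul_conjTranspose_comm hG.isHermitian.inv, Matrix.mul_assoc, trace_mul_comm,
    Matrix.mul_assoc, two_mul]

end RCLike

end Matrix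

/-- Derivative of an interfered user's rate along a perturbation of the precoder: with
`R(t) = R₀ + H (P + tΔ)(P + tΔ)ᴴ Hᴴ` and `Ř(t) = R(t) + H Pₗ Pₗᴴ Hᴴ`, the rate
`φ(t) = log det Ř(t) − log det R(t)` is differentiable at `t = 0` with derivative
`−2 Re tr(Δᴴ Hᴴ (R(0)⁻¹ − Ř(0)⁻¹) H P)`. -/
theorem stmt14 {m n d dl : ℕ} (H : Matrix (Fin m) (Fin n) ℂ)
    (R₀ : Matrix (Fin m) (Fin m) ℂ) (hR : R₀.PosDef)
    (Pl : Matrix (Fin n) (Fin dl) ℂ) (P Δ : Matrix (Fin n) (Fin d) ℂ) :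
    HasDerivAt (fun t : ℝ =>
        Real.log ((R₀ + H * (P + (t : ℂ) • Δ) * (P + (t : ℂ) • Δ)ᴴ * Hᴴ
            + H * Pl * Plᴴ * Hᴴ).det.re)
        - Real.log ((R₀ + H * (P + (t : ℂ) • Δ) * (P + (t : ℂ) • Δ)ᴴ * Hᴴ).det.re))
      (-(2 * (Matrix.trace (Δᴴ * Hᴴ *
          ((R₀ + H * P * Pᴴ * Hᴴ)⁻¹ - (R₀ + H * P * Pᴴ * Hᴴ + H * Pl * Plᴴ * Hᴴ)⁻¹)
          * H * P)).re))
      0 := by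
  have hCurve (t : ℝ) : H * (P + (t : ℂ) • Δ) * (P + (t : ℂ) • Δ)ᴴ * Hᴴ
      = (H * P + (t : ℂ) • (H * Δ)) * (H * P + (t : ℂ) • (H * Δ))ᴴ := by
    rw [← Matrix.mul_smul, ← Matrix.mul_add]
    simp only [conjTranspose_mul, Matrix.mul_assoc]
  have hInterf : (R₀ + H * Pl * Plᴴ * Hᴴ).PosDef := by
    simpa only [conjTranspose_mul, Matrix.mul_assoc] using
      hR.add_posSemidef (posSemidef_self_mul_conjTranspose (H * Pl))
  have hTotal := hasDerivAt_log_re_det_add_mul_conjTranspose hInterf (H * P) (H * Δ)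
  have hSignal := hasDerivAt_log_re_det_add_mul_conjTranspose hR (H * P) (H * Δ)
  simp only [hCurve, add_right_comm R₀ _ (H * Pl * Plᴴ * Hᴴ)]
  refine (hTotal.sub hSignal).congr_deriv ?_
  simp only [conjTranspose_mul, Matrix.mul_sub, Matrix.sub_mul, Matrix.mul_assoc, trace_sub,
    Complex.sub_re, RCLike.re_to_complex]
  ring
end
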